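/- arXiv:math/0701611 — 2 statements merged into one kernel-verified Lean document; each statement's English description precedes it below -/
import Mathlib

section
/- Let A, B ∈ ℝ be centers on the real axis with B ≥ A, let r > 0, and let x = A + r·e^{iθ} be a site in the upper half-plane on the circle of radius r around A (so A's ball has reached x, dist(A,x) = r), and let z = A + r·e^{iφ} with 0 < φ ≤ θ < π/2 (so z lies on the same circle, between x and the real axis on the same side). If dist(B,x) ≤ r, then dist(B,z) ≤ r. -/
open Real

lemma dist_sq_center (A B r ψ : ℝ) :
    dist (B : ℂ) ((A : ℂ) + r * Complex.exp (ψ * Complex.I)) ^ 2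
      = r ^ 2 + (B - A) ^ 2 - 2 * r * (B - A) * Real.cos ψ := by
  rw [Complex.dist_eq, Complex.sq_norm]
  simp [Complex.normSq_apply, Complex.exp_ofReal_mul_I_re, Complex.exp_ofReal_mul_I_im,
    Complex.mul_re, Complex.mul_im]
  nlinarith [Real.sin_sq_add_cos_sq ψ]

/-- Key monotonicity in Lemma 1: if a center `B ≥ A` on the real axis blocks the
point `x = A + r e^{iθ}` of the circle of radius `r` around `A`
(i.e. `dist B x ≤ r`), then it blocks every point `z = A + r e^{iφ}` further
along the arc toward `B`'s side, i.e. with `0 < φ ≤ θ < π/2`. -/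
theorem arc_blocking_monotone
    (A B : ℝ) (hAB : A ≤ B) (r : ℝ) (hr : 0 < r) (θ φ : ℝ)
    (hφ : 0 < φ) (hφθ : φ ≤ θ) (hθ : θ < π / 2)
    (hblock : dist (B : ℂ) ((A : ℂ) + r * Complex.exp (θ * Complex.I)) ≤ r) :
    dist (B : ℂ) ((A : ℂ) + r * Complex.exp (φ * Complex.I)) ≤ r := by
  have hcos : Real.cos θ ≤ Real.cos φ := by
    apply Real.cos_le_cos_of_nonneg_of_le_pi hφ.le _ hφθ
    linarith [Real.pi_pos]
  have h1 : dist (B : ℂ) ((A : ℂ) + r * Complex.exp (θ * Complex.I)) ^ 2 ≤ r ^ 2 := by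
    have := pow_le_pow_left₀ dist_nonneg hblock 2
    linarith
  rw [dist_sq_center] at h1
  have h2 : dist (B : ℂ) ((A : ℂ) + r * Complex.exp (φ * Complex.I)) ^ 2 ≤ r ^ 2 := by
    rw [dist_sq_center]
    nlinarith [mul_le_mul_of_nonneg_left hcos (by nlinarith [sub_nonneg.mpr hAB] : (0:ℝ) ≤ 2*r*(B-A))]
  have h3 := Real.sqrt_le_sqrt h2
  rwa [Real.sqrt_sq dist_nonneg, Real.sqrt_sq hr.le] at h3
end

section
/- Let X ⊆ ℝ² be a finite set and define the minimal spanning forest edge relation: {x,y} is an edge iff there is no path from x to y in the complete graph on X with all edges strictly shorter than dist(x,y). Then the resulting graph on X is connected. -/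
/-! Strong induction on `dist x y` over the finitely many distances realized in `X`:
either `{x, y}` is an edge, or a shortcut path joins `x` to `y` through pairs that are strictly
closer, and those are connected by the induction hypothesis. -/

noncomputable section

abbrev Plane := EuclideanSpace ℝ (Fin 2)

/-- A path from `x` to `y` in the complete graph on `X` all of whose edges are
strictly shorter than `dist x y`. -/
def HasShortcutPath (X : Set Plane) (x y : Plane) : Prop :=
  ∃ l : List Plane, l ≠ [] ∧ (∀ z ∈ l, z ∈ X) ∧
    l.head? = some x ∧ l.getLast? = some y ∧
    l.Chain' (fun a b => dist a b < dist x y)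

/-- `{x, y}` is an edge of the minimal spanning forest of `X`. -/
def MSFEdge (X : Set Plane) (x y : Plane) : Prop :=
  x ∈ X ∧ y ∈ X ∧ x ≠ y ∧ ¬ HasShortcutPath X x y

theorem Set.Finite.reflTransGen_of_forall_or_exists_isChain_lt {α β : Type*} [Preorder β]
    {X : Set α} (hX : X.Finite) (w : α → α → β) (r : α → α → Prop)
    (h : ∀ x ∈ X, ∀ y ∈ X, r x y ∨ ∃ l : List α, l ≠ [] ∧ (∀ z ∈ l, z ∈ X) ∧
      l.head? = some x ∧ l.getLast? = some y ∧ l.IsChain (fun a b => w a b < w x y))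
    {x y : α} (hx : x ∈ X) (hy : y ∈ X) : Relation.ReflTransGen r x y := by
  have hwf : (X ×ˢ X).WellFoundedOn (Function.onFun (· < ·) fun p : α × α => w p.1 p.2) :=
    Set.wellFoundedOn_image.mp ((hX.prod hX).image _).wellFoundedOn
  refine hwf.induction (P := fun p => Relation.ReflTransGen r p.1 p.2) (x := (x, y)) ⟨hx, hy⟩ ?_
  rintro ⟨x, y⟩ ⟨hx, hy⟩ ih
  obtain hxy | ⟨l, hne, hlX, hhead, hlast, hchain⟩ := h x hx y hy
  · exact .single hxy
  have hlinks : l.IsChain (Relation.ReflTransGen r) := hchain.imp_of_mem_imp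
    fun a b ha hb hab => ih (a, b) ⟨hlX a ha, hlX b hb⟩ hab
  have := List.relationReflTransGen_of_exists_isChain l hlinks hne
  rwa [(List.head_eq_iff_head?_eq_some hne).mpr hhead,
    (List.getLast_eq_iff_getLast?_eq_some hne).mpr hlast, Relation.reflTransGen_eq_self] at this

theorem msfEdge_or_hasShortcutPath {X : Set Plane} {x y : Plane} (hx : x ∈ X) (hy : y ∈ X) :
    MSFEdge X x y ∨ HasShortcutPath X x y := by
  by_cases hxy : x = y
  · subst hxy
    exact .inr ⟨[x], List.cons_ne_nil _ _, by simpa using hx, rfl, rfl, List.isChain_singleton _⟩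
  · exact or_iff_not_imp_right.mpr fun hpath => ⟨hx, hy, hxy, hpath⟩

/-- The minimal spanning forest of a finite set `X ⊆ ℝ²` is connected: any two
points of `X` are joined by a chain of MSF edges. -/
theorem msf_connected
    (X : Set Plane) (hX : X.Finite) (x y : Plane) (hx : x ∈ X) (hy : y ∈ X) :
    Relation.ReflTransGen (MSFEdge X) x y :=
  hX.reflTransGen_of_forall_or_exists_isChain_lt dist (MSFEdge X)
    (fun _ hx _ hy => msfEdge_or_hasShortcutPath hx hy) hx hy
end
end
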